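/- arXiv:2209.03775 — 2 statements merged into one kernel-verified Lean document; each statement's English description precedes it below -/
import Mathlib

section
/- For every integer p ≥ 1 and every real x ∈ [0,1], ∑_{n≥0} Q_{n,p}(x) = 1. -/
open MeasureTheory intervalIntegral

/-- `Q n p x` : probability that a dart game with `p` remaining players, where the
probability of beating the best throw so far is `x`, ends after exactly `n` further throws. -/
noncomputable def Q : ℕ → ℕ → ℝ → ℝ
  | 0, p, _ => if p = 1 then 1 else 0
  | n + 1, p, x =>
      if p ≤ 1 then 0
      else (1 - x) * Q n (p - 1) x + ∫ v in (0:ℝ)..x, Q n p v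

/-! The tail `1 - ∑_{n<N} Q_{n,p}(x)` satisfies the same recursion as `Q` once `N ≥ 1`, so by
induction on `N` it is nonnegative and at most `2^N x^{N+1-p} / (N+1-p)!`: of `N` throws at most
`p - 1` eliminate a player, each of the others contributes an integration `∫₀ˣ`, and `2^N` bounds
the number of ways to interleave the two kinds of steps. This bound tends to `0`. -/

open Filter Topology Finset Nat

lemma Q_zero_players (n : ℕ) (x : ℝ) : Q n 0 x = 0 := by
  cases n <;> simp [Q]

lemma Q_succ_one (n : ℕ) (x : ℝ) : Q (n + 1) 1 x = 0 := by
  simp [Q]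

lemma Q_zero_add_two (p : ℕ) (x : ℝ) : Q 0 (p + 2) x = 0 := by
  simp [Q]

lemma Q_succ_add_two (n p : ℕ) (x : ℝ) :
    Q (n + 1) (p + 2) x = (1 - x) * Q n (p + 1) x + ∫ v in (0 : ℝ)..x, Q n (p + 2) v := by
  simp [Q]

lemma continuous_Q : ∀ n p : ℕ, Continuous (Q n p)
  | 0, _ => continuous_const
  | n + 1, 0 => continuous_const.congr fun x => (Q_zero_players (n + 1) x).symm
  | n + 1, 1 => continuous_const.congr fun x => (Q_succ_one n x).symm
  | n + 1, p + 2 => by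
    simp_rw [funext (Q_succ_add_two n p)]
    exact ((continuous_const.sub continuous_id).mul (continuous_Q n (p + 1))).add
      (continuous_primitive (fun a b => (continuous_Q n (p + 2)).intervalIntegrable a b) 0)

lemma Q_nonneg (n p : ℕ) {x : ℝ} (hx : x ∈ Set.Icc (0 : ℝ) 1) : 0 ≤ Q n p x := by
  induction n generalizing p x with
  | zero => unfold Q; split_ifs <;> norm_num
  | succ n ih =>
    rcases p with _ | _ | p
    · simp [Q_zero_players]
    · simp [Q_succ_one]
    · rw [Q_succ_add_two]
      have h_one_sub : 0 ≤ 1 - x := by linarith [hx.2]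
      have h_int : 0 ≤ ∫ v in (0 : ℝ)..x, Q n (p + 2) v :=
        integral_nonneg hx.1 fun v hv => ih (p + 2) ⟨hv.1, hv.2.trans hx.2⟩
      exact add_nonneg (mul_nonneg h_one_sub (ih (p + 1) hx)) h_int

noncomputable def tail (N p : ℕ) (x : ℝ) : ℝ := 1 - ∑ n ∈ range N, Q n p x

lemma continuous_tail (N p : ℕ) : Continuous (tail N p) :=
  continuous_const.sub (continuous_finsetSum _ fun n _ => continuous_Q n p)

lemma tail_zero (p : ℕ) (x : ℝ) : tail 0 p x = 1 := by
  simp [tail]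

lemma tail_zero_players (N : ℕ) (x : ℝ) : tail N 0 x = 1 := by
  simp [tail, Q_zero_players]

lemma tail_succ_one (N : ℕ) (x : ℝ) : tail (N + 1) 1 x = 0 := by
  rw [tail, sum_range_succ']
  simp [Q]

lemma tail_succ_add_two (N p : ℕ) (x : ℝ) :
    tail (N + 1) (p + 2) x
      = (1 - x) * tail N (p + 1) x + ∫ v in (0 : ℝ)..x, tail N (p + 2) v := by
  have h_int : ∫ v in (0 : ℝ)..x, ∑ n ∈ range N, Q n (p + 2) v
      = ∑ n ∈ range N, ∫ v in (0 : ℝ)..x, Q n (p + 2) v :=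
    intervalIntegral.integral_finsetSum fun n _ => (continuous_Q n _).intervalIntegrable _ _
  simp only [tail, sum_range_succ', Q_zero_add_two, Q_succ_add_two, sum_add_distrib, ← mul_sum]
  rw [integral_sub intervalIntegrable_const
    ((continuous_finsetSum _ fun n _ => continuous_Q n _).intervalIntegrable _ _), h_int]
  simp only [intervalIntegral.integral_const, smul_eq_mul]
  ring

lemma tail_nonneg (N p : ℕ) {x : ℝ} (hx : x ∈ Set.Icc (0 : ℝ) 1) : 0 ≤ tail N p x := by
  induction N generalizing p x with
  | zero => simp [tail_zero]
  | succ N ih =>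
    rcases p with _ | _ | p
    · simp [tail_zero_players]
    · simp [tail_succ_one]
    · rw [tail_succ_add_two]
      have h_one_sub : 0 ≤ 1 - x := by linarith [hx.2]
      have h_int : 0 ≤ ∫ v in (0 : ℝ)..x, tail N (p + 2) v :=
        integral_nonneg hx.1 fun v hv => ih (p + 2) ⟨hv.1, hv.2.trans hx.2⟩
      exact add_nonneg (mul_nonneg h_one_sub (ih (p + 1) hx)) h_int

noncomputable def tailBound (N p : ℕ) (x : ℝ) : ℝ := 2 ^ N * (x ^ (N + 1 - p) / (N + 1 - p)!)

lemma integral_pow_div_factorial (k : ℕ) (x : ℝ) :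
    ∫ v in (0 : ℝ)..x, v ^ k / k ! = x ^ (k + 1) / (k + 1)! := by
  rw [intervalIntegral.integral_div, integral_pow, factorial_succ]
  push_cast
  field_simp
  ring

lemma integral_tailBound_succ_le (N p : ℕ) {x : ℝ} (hx : x ≤ 1) :
    ∫ v in (0 : ℝ)..x, tailBound N (p + 1) v ≤ tailBound N p x := by
  simp only [tailBound, intervalIntegral.integral_const_mul, integral_pow_div_factorial]
  rcases le_or_gt p N with h | h
  · rw [show N + 1 - (p + 1) + 1 = N + 1 - p by omega]
  · -- both exponents truncate to `0`
    rw [show N + 1 - (p + 1) = 0 by omega, show N + 1 - p = 0 by omega]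
    simp only [zero_add, pow_one, pow_zero, factorial_zero, factorial_one, cast_one, div_one]
    gcongr

lemma tailBound_succ_succ (N p : ℕ) (x : ℝ) :
    tailBound (N + 1) (p + 1) x = 2 * tailBound N p x := by
  simp only [tailBound, Nat.add_sub_add_right, pow_succ]
  ring

lemma continuous_tailBound (N p : ℕ) : Continuous (tailBound N p) := by
  unfold tailBound
  fun_prop

lemma tailBound_nonneg (N p : ℕ) {x : ℝ} (hx : 0 ≤ x) : 0 ≤ tailBound N p x := by
  unfold tailBound
  positivity

lemma tail_le_tailBound (N : ℕ) {p : ℕ} (hp : 1 ≤ p) {x : ℝ} (hx : x ∈ Set.Icc (0 : ℝ) 1) :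
    tail N p x ≤ tailBound N p x := by
  induction N generalizing p x with
  | zero => simp [tail_zero, tailBound, Nat.sub_eq_zero_of_le hp]
  | succ N ih =>
    rcases p with _ | _ | p
    · omega
    · simpa [tail_succ_one] using tailBound_nonneg (N + 1) 1 hx.1
    · have h_one_sub : 0 ≤ 1 - x := by linarith [hx.2]
      have h_int : ∫ v in (0 : ℝ)..x, tail N (p + 2) v
          ≤ ∫ v in (0 : ℝ)..x, tailBound N (p + 2) v :=
        integral_mono_on hx.1 ((continuous_tail N _).intervalIntegrable _ _)
          ((continuous_tailBound N _).intervalIntegrable _ _)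
          fun v hv => ih (by omega) ⟨hv.1, hv.2.trans hx.2⟩
      calc tail (N + 1) (p + 2) x
          = (1 - x) * tail N (p + 1) x + ∫ v in (0 : ℝ)..x, tail N (p + 2) v :=
            tail_succ_add_two N p x
        _ ≤ (1 - x) * tailBound N (p + 1) x + tailBound N (p + 1) x := by
            gcongr
            · exact ih (by omega) hx
            · exact h_int.trans (integral_tailBound_succ_le N (p + 1) hx.2)
        _ ≤ 2 * tailBound N (p + 1) x := by linarith [mul_nonneg hx.1 (tailBound_nonneg N (p + 1) hx.1)]
        _ = tailBound (N + 1) (p + 2) x := (tailBound_succ_succ N (p + 1) x).symm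

lemma tendsto_tailBound_zero (p : ℕ) {x : ℝ} (hx : x ∈ Set.Icc (0 : ℝ) 1) :
    Tendsto (fun N => tailBound N p x) atTop (𝓝 0) := by
  refine squeeze_zero (fun N => tailBound_nonneg N p hx.1) (fun N => ?_)
    (FloorSemiring.tendsto_mul_pow_div_factorial_sub_atTop (1 : ℝ) 2 p)
  rw [tailBound, one_mul, mul_div_assoc']
  gcongr ?_ / ?_
  · exact mul_le_of_le_one_right (by positivity) (pow_le_one₀ hx.1 hx.2)
  · exact_mod_cast factorial_le (by omega)

/-- For every `p ≥ 1` and `x ∈ [0,1]`, `∑_{n≥0} Q_{n,p}(x) = 1`: the `Q_{n,p}(x)` form a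
probability distribution in `n`. -/
theorem Q_hasSum_one (p : ℕ) (hp : 1 ≤ p) (x : ℝ) (hx : x ∈ Set.Icc (0:ℝ) 1) :
    HasSum (fun n : ℕ => Q n p x) 1 := by
  rw [hasSum_iff_tendsto_nat_of_nonneg fun n => Q_nonneg n p hx]
  have h_tail : Tendsto (fun N => tail N p x) atTop (𝓝 0) :=
    squeeze_zero (fun N => tail_nonneg N p hx) (fun N => tail_le_tailBound N hp hx)
      (tendsto_tailBound_zero p hx)
  simpa [tail] using h_tail.const_sub 1
end

section
/- For every integer p ≥ 2 and every integer k with 1 ≤ k ≤ p−1, P_{p,k} > P_{p,k+1}; that is, in a p-player dart game each player has a strictly greater probability of winning than the next player. -/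
open MeasureTheory intervalIntegral

/-- `R n p k x` : probability that, in a dart game with `p` remaining players where the
probability of beating the best throw so far is `x`, the `k`-th player in throwing order
wins after exactly `n` further throws. -/
noncomputable def R : ℕ → ℕ → ℕ → ℝ → ℝ
  | 0, p, k, _ => if p = 1 ∧ k = 1 then 1 else 0
  | n + 1, p, k, x =>
      if p ≤ 1 then 0
      else if k = 1 then ∫ v in (0:ℝ)..x, R n p p v
      else (1 - x) * R n (p - 1) (k - 1) x + ∫ v in (0:ℝ)..x, R n p (k - 1) v

/-- `P p k x = ∑_{n≥0} R_{n,p,k}(x)` : the probability that, when `p` players remain and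
the probability of beating the best throw so far is `x`, the `k`-th player in throwing
order wins the game. -/
noncomputable def P (p k : ℕ) (x : ℝ) : ℝ := ∑' n : ℕ, R n p k x

open Set
open scoped Nat

/-!
Write `I f (x) = ∫₀ˣ f`. Summed over `n`, the recursion for `R` (whose terms are dominated by
`2ⁿ / (n+1-p)!` on `[0,1]`) becomes `P_{p,1} = I P_{p,p}` and
`P_{p,k+1}(x) = (1 - x) P_{p-1,k}(x) + I P_{p,k}(x)`. At `x = 1` this reads
`P_{p,k+1}(1) = ∫₀¹ P_{p,k}`: for `k = 1` the claim becomes `∫₀¹ P_{p,1} < P_{p,1}(1)`, true as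
`P_{p,1}` is strictly increasing, and for `k ≥ 2` it follows from `P_{p,k} < P_{p,k-1}` on `(0,1)`.

By induction on `p`, `P_{p,j+1} < P_{p,j}` on `(0,1]` for `1 ≤ j ≤ p - 2`. In the
`(p+1)`-player game the functional equation carries this from `j` to `j + 1`, so everything
rests on the first two players. There the induction hypothesis gives
`P_{p+1,j+1} ≤ P_{p+1,j} + P_{p,j}`, and with Cauchy's formula `∫₀ˣ I f = ∫₀ˣ (x - s) f(s) ds`
this yields `P_{p+1,1}(x) - P_{p+1,2}(x) ≥ ∫₀ˣ (x - s) s P_{p,p}(s) ds > 0`.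
-/

theorem IntervalIntegrable.of_continuousOn_Icc {E : Type*} [NormedAddCommGroup E] {f : ℝ → E}
    {a b x : ℝ} (hf : ContinuousOn f (Icc a b)) (hx : x ∈ Icc a b) : IntervalIntegrable f volume a x :=
  (hf.mono (Icc_subset_Icc_right hx.2)).intervalIntegrable_of_Icc hx.1

@[fun_prop]
theorem ContinuousOn.primitive_Icc_zero_one {E : Type*} [NormedAddCommGroup E]
    [NormedSpace ℝ E] {f : ℝ → E} (hf : ContinuousOn f (Icc 0 1)) :
    ContinuousOn (fun x => ∫ v in (0:ℝ)..x, f v) (Icc 0 1) := by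
  simpa only [uIcc_of_le zero_le_one] using
    continuousOn_primitive_interval' (hf.intervalIntegrable_of_Icc zero_le_one) left_mem_uIcc

theorem integral_primitive_eq {f : ℝ → ℝ} {a b : ℝ} (hab : a ≤ b)
    (hf : ContinuousOn f (Icc a b)) :
    ∫ s in a..b, ∫ u in a..s, f u = ∫ s in a..b, (b - s) * f s := by
  have hF : ∀ s ∈ Ioo (min a b) (max a b), HasDerivAt (fun y => ∫ u in a..y, f u) (f s) s := by
    intro s hs
    rw [min_eq_left hab, max_eq_right hab] at hs
    exact integral_hasDerivAt_right (.of_continuousOn_Icc hf (Ioo_subset_Icc_self hs))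
      ((hf.mono Ioo_subset_Icc_self).stronglyMeasurableAtFilter isOpen_Ioo s hs)
      (hf.continuousAt (Icc_mem_nhds hs.1 hs.2))
  have hfi : IntervalIntegrable f volume a b := hf.intervalIntegrable_of_Icc hab
  have hparts := integral_mul_deriv_eq_deriv_mul_of_hasDerivAt (a := a) (b := b)
    (v := fun y => y - b) (v' := fun _ => 1)
    (continuousOn_primitive_interval' hfi left_mem_uIcc)
    (by fun_prop) hF (fun s _ => (hasDerivAt_id s).sub_const b) hfi intervalIntegrable_const
  simp only [mul_one, sub_self, mul_zero, integral_same, zero_mul, zero_sub] at hparts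
  rw [hparts, ← intervalIntegral.integral_neg]
  congr 1 with s
  ring

theorem integral_le_integral_add_of_le {f g h : ℝ → ℝ} {x : ℝ} (hf : ContinuousOn f (Icc 0 1))
    (hg : ContinuousOn g (Icc 0 1)) (hh : ContinuousOn h (Icc 0 1)) (hx : x ∈ Icc (0:ℝ) 1)
    (hle : ∀ v ∈ Ioo 0 x, f v ≤ g v + h v) :
    ∫ v in (0:ℝ)..x, f v ≤ (∫ v in (0:ℝ)..x, g v) + ∫ v in (0:ℝ)..x, h v := by
  rw [← integral_add (.of_continuousOn_Icc hg hx) (.of_continuousOn_Icc hh hx)]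
  exact integral_mono_on_of_le_Ioo hx.1 (.of_continuousOn_Icc hf hx)
    (.of_continuousOn_Icc (hg.add hh) hx) hle

theorem pow_div_factorial_le_of_le {x : ℝ} (hx : x ∈ Icc (0:ℝ) 1) {m m' : ℕ} (h : m ≤ m') :
    x ^ m' / (m' ! : ℝ) ≤ x ^ m / (m ! : ℝ) :=
  div_le_div₀ (pow_nonneg hx.1 m) (pow_le_pow_of_le_one hx.1 hx.2 h) (by positivity)
    (by exact_mod_cast Nat.factorial_le h)

theorem integral_le_pow_div_factorial {f : ℝ → ℝ} {x c : ℝ} {m : ℕ} (hx : 0 ≤ x)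
    (hf : IntervalIntegrable f volume 0 x) (h : ∀ v ∈ Icc 0 x, f v ≤ c * (v ^ m / (m ! : ℝ))) :
    ∫ v in (0:ℝ)..x, f v ≤ c * (x ^ (m + 1) / ((m + 1)! : ℝ)) := by
  calc ∫ v in (0:ℝ)..x, f v ≤ ∫ v in (0:ℝ)..x, c * (v ^ m / (m ! : ℝ)) :=
        integral_mono_on hx hf (Continuous.intervalIntegrable (by fun_prop) _ _) h
    _ = c * (x ^ (m + 1) / ((m + 1)! : ℝ)) := by
        rw [intervalIntegral.integral_const_mul, intervalIntegral.integral_div, integral_pow,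
          Nat.factorial_succ]
        push_cast
        field_simp
        ring

theorem summable_two_pow_div_factorial_sub (p : ℕ) :
    Summable fun n : ℕ => (2:ℝ) ^ n / ((n + 1 - p)! : ℝ) := by
  rw [← summable_nat_add_iff p]
  refine .of_nonneg_of_le (fun n => by positivity) (fun n => ?_)
    ((Real.summable_pow_div_factorial 2).mul_left (2 ^ p))
  rw [show n + p + 1 - p = n + 1 by omega, pow_add, mul_comm, mul_div_assoc]
  gcongr
  omega

theorem continuous_R (n p k : ℕ) : Continuous (R n p k) := by
  induction n generalizing p k with
  | zero => exact continuous_const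
  | succ n ih =>
    have hprim (j : ℕ) : Continuous fun x => ∫ v in (0:ℝ)..x, R n p j v :=
      continuous_primitive (fun _ _ => (ih p j).intervalIntegrable _ _) 0
    show Continuous fun x => R (n + 1) p k x
    simp only [R]
    split_ifs <;> fun_prop

theorem R_nonneg (n p k : ℕ) {x : ℝ} (hx : x ∈ Icc (0:ℝ) 1) : 0 ≤ R n p k x := by
  induction n, p, k, x using R.induct with
  | case1 | case2 => rw [R]; positivity
  | case3 n p k x hp => rw [R, if_pos hp]
  | case4 n p x hp ih =>
    rw [R, if_neg hp, if_pos rfl]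
    exact integral_nonneg hx.1 fun v hv => ih v ⟨hv.1, hv.2.trans hx.2⟩
  | case5 n p k x hp hk ih ih' =>
    rw [R, if_neg hp, if_neg hk]
    exact add_nonneg (mul_nonneg (sub_nonneg.2 hx.2) (ih hx))
      (integral_nonneg hx.1 fun v hv => ih' v ⟨hv.1, hv.2.trans hx.2⟩)

theorem R_le_pow_div_factorial (n p k : ℕ) {x : ℝ} (hx : x ∈ Icc (0:ℝ) 1) :
    R n p k x ≤ 2 ^ n * (x ^ (n + 1 - p) / ((n + 1 - p)! : ℝ)) := by
  induction n generalizing p k x with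
  | zero =>
    have := hx.1
    rw [R]
    split_ifs with h
    · obtain ⟨rfl, rfl⟩ := h; simp
    · positivity
  | succ n ih =>
    have := hx.1
    set G := x ^ (n + 1 + 1 - p) / ((n + 1 + 1 - p)! : ℝ)
    have hint (j : ℕ) : ∫ v in (0:ℝ)..x, R n p j v ≤ 2 ^ n * G :=
      (integral_le_pow_div_factorial hx.1 ((continuous_R n p j).intervalIntegrable 0 x)
        fun v hv => ih p j ⟨hv.1, hv.2.trans hx.2⟩).trans
        (mul_le_mul_of_nonneg_left (pow_div_factorial_le_of_le hx (by omega)) (by positivity))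
    rw [R, pow_succ]
    split_ifs with hp hk
    · positivity
    · linarith [hint p, show 0 ≤ 2 ^ n * G by positivity]
    · have hlast : (1 - x) * R n (p - 1) (k - 1) x ≤ 2 ^ n * G := by
        have h := ih (p - 1) (k - 1) hx
        rw [show n + 1 - (p - 1) = n + 1 + 1 - p by omega] at h
        nlinarith [R_nonneg n (p - 1) (k - 1) hx]
      linarith [hint (k - 1)]

theorem R_le_two_pow_div_factorial (n p k : ℕ) {x : ℝ} (hx : x ∈ Icc (0:ℝ) 1) :
    R n p k x ≤ 2 ^ n / ((n + 1 - p)! : ℝ) := by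
  have := pow_le_one₀ (n := n + 1 - p) hx.1 hx.2
  calc R n p k x ≤ 2 ^ n * (x ^ (n + 1 - p) / ((n + 1 - p)! : ℝ)) := R_le_pow_div_factorial n p k hx
    _ ≤ 2 ^ n * (1 / ((n + 1 - p)! : ℝ)) := by gcongr
    _ = 2 ^ n / ((n + 1 - p)! : ℝ) := mul_one_div _ _

section WinProbability

variable (p k : ℕ) {x : ℝ}

theorem summable_R (hx : x ∈ Icc (0:ℝ) 1) : Summable fun n => R n p k x :=
  .of_nonneg_of_le (fun n => R_nonneg n p k hx) (fun n => R_le_two_pow_div_factorial n p k hx)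
    (summable_two_pow_div_factorial_sub p)

theorem hasSum_R (hx : x ∈ Icc (0:ℝ) 1) : HasSum (fun n => R n p k x) (P p k x) :=
  (summable_R p k hx).hasSum

theorem P_nonneg (hx : x ∈ Icc (0:ℝ) 1) : 0 ≤ P p k x :=
  tsum_nonneg fun n => R_nonneg n p k hx

@[fun_prop]
theorem continuousOn_P : ContinuousOn (P p k) (Icc 0 1) :=
  continuousOn_tsum (fun n => (continuous_R n p k).continuousOn)
    (summable_two_pow_div_factorial_sub p) fun n x hx => by
      rw [Real.norm_of_nonneg (R_nonneg n p k hx)]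
      exact R_le_two_pow_div_factorial n p k hx

theorem hasSum_integral_R (hx : x ∈ Icc (0:ℝ) 1) :
    HasSum (fun n => ∫ v in (0:ℝ)..x, R n p k v) (∫ v in (0:ℝ)..x, P p k v) := by
  have hIcc {v : ℝ} (hv : v ∈ uIoc 0 x) : v ∈ Icc (0:ℝ) 1 :=
    uIcc_subset_Icc (left_mem_Icc.2 zero_le_one) hx (uIoc_subset_uIcc hv)
  refine hasSum_integral_of_dominated_convergence (fun n _ => 2 ^ n / ((n + 1 - p)! : ℝ))
    (fun n => (continuous_R n p k).aestronglyMeasurable) (fun n => ae_of_all _ fun v hv => ?_)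
    (ae_of_all _ fun _ _ => summable_two_pow_div_factorial_sub p) intervalIntegrable_const
    (ae_of_all _ fun v hv => hasSum_R p k (hIcc hv))
  rw [Real.norm_of_nonneg (R_nonneg n p k (hIcc hv))]
  exact R_le_two_pow_div_factorial n p k (hIcc hv)

end WinProbability

theorem P_one_one (x : ℝ) : P 1 1 x = 1 := by
  rw [P, tsum_eq_single 0 fun n hn => ?_]
  · simp [R]
  · obtain ⟨n, rfl⟩ := Nat.exists_eq_succ_of_ne_zero hn
    simp [R]

theorem P_succ_one {p : ℕ} (hp : 1 ≤ p) {x : ℝ} (hx : x ∈ Icc (0:ℝ) 1) :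
    P (p + 1) 1 x = ∫ v in (0:ℝ)..x, P (p + 1) (p + 1) v := by
  refine (hasSum_R (p + 1) 1 hx).unique ?_
  rw [← hasSum_nat_add_iff' 1]
  simpa [R, show p ≠ 0 by omega] using hasSum_integral_R (p + 1) (p + 1) hx

theorem P_succ_succ {p k : ℕ} (hp : 1 ≤ p) (hk : 1 ≤ k) {x : ℝ} (hx : x ∈ Icc (0:ℝ) 1) :
    P (p + 1) (k + 1) x = (1 - x) * P p k x + ∫ v in (0:ℝ)..x, P (p + 1) k v := by
  refine (hasSum_R (p + 1) (k + 1) hx).unique ?_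
  rw [← hasSum_nat_add_iff' 1]
  simpa [R, show p ≠ 0 by omega, show k ≠ 0 by omega] using
    ((hasSum_R p k hx).mul_left (1 - x)).add (hasSum_integral_R (p + 1) k hx)

theorem P_self_pos {p : ℕ} (hp : 1 ≤ p) {x : ℝ} (hx : x ∈ Ico (0:ℝ) 1) : 0 < P p p x := by
  induction p, hp using Nat.le_induction with
  | base => simp [P_one_one]
  | succ p hp ih =>
    have hx' := Ico_subset_Icc_self hx
    rw [P_succ_succ hp hp hx']
    exact add_pos_of_pos_of_nonneg (mul_pos (sub_pos.2 hx.2) ih)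
      (integral_nonneg hx.1 fun v hv => P_nonneg (p + 1) p ⟨hv.1, hv.2.trans hx'.2⟩)

theorem integral_P_succ_one {p : ℕ} (hp : 1 ≤ p) {x : ℝ} (hx : x ∈ Icc (0:ℝ) 1) :
    ∫ v in (0:ℝ)..x, P (p + 1) 1 v = ∫ s in (0:ℝ)..x, (x - s) * P (p + 1) (p + 1) s := by
  rw [← integral_primitive_eq hx.1 ((continuousOn_P _ _).mono (Icc_subset_Icc_right hx.2))]
  exact integral_congr fun v hv =>
    P_succ_one hp (uIcc_subset_Icc (left_mem_Icc.2 zero_le_one) hx hv)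

theorem integral_P_succ_one_le {p : ℕ} (hp : 1 ≤ p) {x : ℝ} (hx : x ∈ Icc (0:ℝ) 1) :
    ∫ v in (0:ℝ)..x, P (p + 1) 1 v ≤ P (p + 1) 1 x := by
  rw [integral_P_succ_one hp hx, P_succ_one hp hx]
  refine integral_mono_on hx.1 (.of_continuousOn_Icc (by fun_prop) hx)
    (.of_continuousOn_Icc (by fun_prop) hx) fun s hs => ?_
  have := P_nonneg (p + 1) (p + 1) ⟨hs.1, hs.2.trans hx.2⟩
  nlinarith [hs.1, hx.2]

theorem integral_P_succ_one_lt {p : ℕ} (hp : 1 ≤ p) :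
    ∫ v in (0:ℝ)..1, P (p + 1) 1 v < P (p + 1) 1 1 := by
  have h1 : (1:ℝ) ∈ Icc 0 1 := right_mem_Icc.2 zero_le_one
  rw [integral_P_succ_one hp h1, P_succ_one hp h1]
  refine integral_lt_integral_of_continuousOn_of_le_of_exists_lt zero_lt_one (by fun_prop)
    (by fun_prop) (fun s hs => ?_) ⟨1 / 2, by norm_num, ?_⟩
  · have := P_nonneg (p + 1) (p + 1) (Ioc_subset_Icc_self hs)
    nlinarith [hs.1]
  · have := P_self_pos (p := p + 1) (by omega) (x := 1 / 2) (by norm_num)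
    linarith

theorem integral_P_le_P_succ {p k : ℕ} (hp : 2 ≤ p) (hk : 1 ≤ k) {x : ℝ}
    (hx : x ∈ Icc (0:ℝ) 1) : ∫ v in (0:ℝ)..x, P p k v ≤ P p (k + 1) x := by
  obtain ⟨p, rfl⟩ : ∃ p', p = p' + 1 := ⟨p - 1, by omega⟩
  rw [P_succ_succ (by omega) hk hx]
  have := mul_nonneg (sub_nonneg.2 hx.2) (P_nonneg p k hx)
  linarith

-- The last pair is excluded: `P q q 0 = 1` while `P q (q - 1) 0 = 0`.
def AntitoneBeforeLast (q : ℕ) : Prop :=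
  ∀ j, 1 ≤ j → j + 2 ≤ q → ∀ x ∈ Ioc (0:ℝ) 1, P q (j + 1) x ≤ P q j x

theorem P_succ_le_add {q : ℕ} (hA : AntitoneBeforeLast q) {j : ℕ} (hj : 1 ≤ j)
    (hjq : j + 1 ≤ q) {x : ℝ} (hx : x ∈ Ioc (0:ℝ) 1) :
    P (q + 1) (j + 1) x ≤ P (q + 1) j x + P q j x := by
  have hx' := Ioc_subset_Icc_self hx
  induction j, hj using Nat.le_induction generalizing x with
  | base =>
    rw [P_succ_succ (by omega) le_rfl hx']
    have := integral_P_succ_one_le (p := q) (by omega) hx'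
    have := P_nonneg q 1 hx'
    nlinarith [hx.1]
  | succ j hj ih =>
    have hint := integral_le_integral_add_of_le (continuousOn_P (q + 1) (j + 1))
      (continuousOn_P (q + 1) j) (continuousOn_P q j) hx'
      fun v hv => ih (by omega) ⟨hv.1, hv.2.le.trans hx.2⟩ ⟨hv.1.le, hv.2.le.trans hx.2⟩
    calc P (q + 1) (j + 1 + 1) x
        = (1 - x) * P q (j + 1) x + ∫ v in (0:ℝ)..x, P (q + 1) (j + 1) v :=
          P_succ_succ (by omega) (by omega) hx'
      _ ≤ (1 - x) * P q j x + ((∫ v in (0:ℝ)..x, P (q + 1) j v) + ∫ v in (0:ℝ)..x, P q j v) :=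
          add_le_add (mul_le_mul_of_nonneg_left (hA j hj (by omega) x hx) (sub_nonneg.2 hx.2))
            hint
      _ ≤ P (q + 1) (j + 1) x + P q (j + 1) x := by
          rw [P_succ_succ (by omega) hj hx']
          linarith [integral_P_le_P_succ (p := q) (by omega) hj hx']

theorem integral_P_succ_self_le {q : ℕ} (hA : AntitoneBeforeLast q) (hq : 2 ≤ q) {t : ℝ}
    (ht : t ∈ Icc (0:ℝ) 1) :
    ∫ s in (0:ℝ)..t, P (q + 1) (q + 1) s
      ≤ (∫ s in (0:ℝ)..t, P (q + 1) q s) + ∫ s in (0:ℝ)..t, (1 - s) * P q q s := by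
  obtain ⟨k, rfl⟩ : ∃ k, q = k + 1 := ⟨q - 1, by omega⟩
  have hpt : ∀ s ∈ Ioo 0 t, P (k + 2) (k + 2) s
      ≤ (P (k + 2) (k + 1) s + (1 - s) * P (k + 1) (k + 1) s)
        + ((∫ u in (0:ℝ)..s, P (k + 1) k u) - (1 - s) * P (k + 1) k s) := by
    intro s hs
    have hs' : s ∈ Icc (0:ℝ) 1 := ⟨hs.1.le, hs.2.le.trans ht.2⟩
    have hint := integral_le_integral_add_of_le (continuousOn_P (k + 2) (k + 1))
      (continuousOn_P (k + 2) k) (continuousOn_P (k + 1) k) hs'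
      fun v hv => P_succ_le_add hA (by omega) le_rfl ⟨hv.1, hv.2.le.trans hs'.2⟩
    rw [P_succ_succ (by omega) (by omega) hs', P_succ_succ (p := k + 1) (by omega) (by omega) hs']
    linarith
  have hcauchy : ∫ s in (0:ℝ)..t, ∫ u in (0:ℝ)..s, P (k + 1) k u
      ≤ ∫ s in (0:ℝ)..t, (1 - s) * P (k + 1) k s := by
    rw [integral_primitive_eq ht.1 ((continuousOn_P _ _).mono (Icc_subset_Icc_right ht.2))]
    refine integral_mono_on ht.1 (.of_continuousOn_Icc (by fun_prop) ht)
      (.of_continuousOn_Icc (by fun_prop) ht) fun s hs => ?_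
    have := P_nonneg (k + 1) k ⟨hs.1, hs.2.trans ht.2⟩
    nlinarith [ht.2]
  have := integral_le_integral_add_of_le (by fun_prop) (by fun_prop) (by fun_prop) ht hpt
  rw [integral_add (.of_continuousOn_Icc (by fun_prop) ht) (.of_continuousOn_Icc (by fun_prop) ht),
    integral_sub (.of_continuousOn_Icc (by fun_prop) ht) (.of_continuousOn_Icc (by fun_prop) ht)]
    at this
  linarith

theorem P_succ_two_add_le {q : ℕ} (hA : AntitoneBeforeLast q) (hq : 2 ≤ q) {x : ℝ}
    (hx : x ∈ Icc (0:ℝ) 1) :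
    P (q + 1) 2 x + ∫ s in (0:ℝ)..x, (x - s) * s * P q q s ≤ P (q + 1) 1 x := by
  have hintegrable {g : ℝ → ℝ} (hg : ContinuousOn g (Icc 0 1)) : IntervalIntegrable g volume 0 x :=
    .of_continuousOn_Icc hg hx
  have hIcc : uIcc 0 x ⊆ Icc (0:ℝ) 1 := uIcc_subset_Icc (left_mem_Icc.2 zero_le_one) hx
  have hP1 : P (q + 1) 1 x = (∫ t in (0:ℝ)..x, (1 - t) * P q q t)
      + ∫ t in (0:ℝ)..x, ∫ u in (0:ℝ)..t, P (q + 1) q u := by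
    rw [P_succ_one (by omega) hx,
      ← integral_add (hintegrable (by fun_prop)) (hintegrable (by fun_prop))]
    exact integral_congr fun t ht => P_succ_succ (by omega) (by omega) (hIcc ht)
  have hP2 : P (q + 1) 2 x = (1 - x) * (∫ t in (0:ℝ)..x, P q q t)
      + ∫ t in (0:ℝ)..x, ∫ u in (0:ℝ)..t, P (q + 1) (q + 1) u := by
    obtain ⟨k, rfl⟩ : ∃ k, q = k + 1 := ⟨q - 1, by omega⟩
    rw [P_succ_succ (by omega) le_rfl hx, P_succ_one (by omega) hx]
    exact congrArg _ (integral_congr fun t ht => P_succ_one (by omega) (hIcc ht))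
  have hlast := integral_le_integral_add_of_le (by fun_prop) (by fun_prop) (by fun_prop) hx
    fun t ht => integral_P_succ_self_le hA hq ⟨ht.1.le, ht.2.le.trans hx.2⟩
  rw [integral_primitive_eq (f := fun s => (1 - s) * P q q s) hx.1
    (ContinuousOn.mono (by fun_prop) (Icc_subset_Icc_right hx.2))] at hlast
  have hweights : (∫ t in (0:ℝ)..x, (1 - t) * P q q t) - (1 - x) * (∫ t in (0:ℝ)..x, P q q t)
      - ∫ s in (0:ℝ)..x, (x - s) * ((1 - s) * P q q s)
      = ∫ s in (0:ℝ)..x, (x - s) * s * P q q s := by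
    rw [← intervalIntegral.integral_const_mul,
      ← integral_sub (hintegrable (by fun_prop)) (hintegrable (by fun_prop)),
      ← integral_sub (hintegrable (by fun_prop)) (hintegrable (by fun_prop))]
    congr 1 with s
    ring
  linarith

theorem P_succ_succ_lt {p k : ℕ} (hp : 1 ≤ p) (hk : 1 ≤ k) {x : ℝ} (hx : x ∈ Ioc (0:ℝ) 1)
    (hprev : (1 - x) * P p (k + 1) x ≤ (1 - x) * P p k x)
    (h : ∀ v ∈ Ioc 0 x, P (p + 1) (k + 1) v < P (p + 1) k v) :
    P (p + 1) (k + 2) x < P (p + 1) (k + 1) x := by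
  have hx' := Ioc_subset_Icc_self hx
  have hint := integral_lt_integral_of_continuousOn_of_le_of_exists_lt hx.1
    ((continuousOn_P (p + 1) (k + 1)).mono (Icc_subset_Icc_right hx.2))
    ((continuousOn_P (p + 1) k).mono (Icc_subset_Icc_right hx.2)) (fun v hv => (h v hv).le)
    ⟨x, right_mem_Icc.2 hx.1.le, h x (right_mem_Ioc.2 hx.1)⟩
  rw [P_succ_succ hp (by omega) hx', P_succ_succ hp hk hx']
  linarith

theorem P_succ_lt {q j : ℕ} (hj : 1 ≤ j) (hjq : j + 2 ≤ q) {x : ℝ} (hx : x ∈ Ioc (0:ℝ) 1) :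
    P q (j + 1) x < P q j x := by
  induction q generalizing j x with
  | zero => omega
  | succ q ih =>
    have hA : AntitoneBeforeLast q := fun j hj hjq x hx => (ih hj hjq hx).le
    induction j, hj using Nat.le_induction generalizing x with
    | base =>
      have hpos : 0 < ∫ s in (0:ℝ)..x, (x - s) * s * P q q s :=
        intervalIntegral_pos_of_pos_on (.of_continuousOn_Icc (by fun_prop) (Ioc_subset_Icc_self hx))
          (fun s hs => mul_pos (mul_pos (sub_pos.2 hs.2) hs.1)
            (P_self_pos (by omega) ⟨hs.1.le, hs.2.trans_le hx.2⟩)) hx.1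
      linarith [P_succ_two_add_le hA (by omega) (Ioc_subset_Icc_self hx)]
    | succ j hj ihj =>
      exact P_succ_succ_lt (by omega) hj hx
        (mul_le_mul_of_nonneg_left (ih hj (by omega) hx).le (sub_nonneg.2 hx.2))
        fun v hv => ihj (by omega) ⟨hv.1, hv.2.trans hx.2⟩

/-- In a `p`-player dart game, each player has a strictly greater probability of winning
than the next player: `P_{p,k} > P_{p,k+1}` for `1 ≤ k ≤ p − 1`. -/
theorem P_strict_monotone (p k : ℕ) (hp : 2 ≤ p) (hk1 : 1 ≤ k) (hk : k ≤ p - 1) :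
    P p k 1 > P p (k + 1) 1 := by
  obtain ⟨q, rfl⟩ : ∃ q, p = q + 1 := ⟨p - 1, by omega⟩
  rcases hk1.eq_or_lt' with rfl | hk2
  · rw [gt_iff_lt, P_succ_succ (by omega) le_rfl (right_mem_Icc.2 zero_le_one)]
    simpa using integral_P_succ_one_lt (by omega)
  · obtain ⟨j, rfl⟩ : ∃ j, k = j + 1 := ⟨k - 1, by omega⟩
    exact P_succ_succ_lt (by omega) (by omega) (right_mem_Ioc.2 one_pos) (by simp)
      fun v hv => P_succ_lt (by omega) (by omega) hv
end
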